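/- arXiv:1409.8632 — 7 statements merged into one kernel-verified Lean document; each statement's English description precedes it below -/
import Mathlib

section
/- Let $f : \mathbb{R} \to \mathbb{R}$ be convex and monotone nondecreasing on $[0,\infty)$ with $f(x) \geq 0$ for $x \geq 0$, and let $r \geq 1$ and $m \geq 1$ be real numbers. Let $(p_i)_{i \in I}$ be a finite family of nonnegative weights with $\sum_i p_i = 1$, let $(c_i)_{i \in I}$ be nonnegative reals, let $q \geq 0$ satisfy $q \leq \sum_i p_i c_i$, and let $(y_j)_{j=1}^n$ be nonnegative reals satisfying $q^r \geq \sum_{j=1}^n y_j^r$ and the superadditivity condition $f\left(\sum_{j=1}^n y_j^r\right)^m \geq \sum_{j=1}^n f\left(y_j^r\right)^m$. Then $\left(\sum_{i \in I} p_i f(c_i^r)\right)^m \geq \sum_{j=1}^n f(y_j^r)^m$. -/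
/-- If `q^r` is monogamous and `Q = f (q^r)` for a monotonically increasing convex
nonnegative function `f` satisfying the superadditivity condition
`f (∑ y_j^r)^m ≥ ∑ f (y_j^r)^m`, then `Q^m` is monogamous:
`(∑ p_i f(c_i^r))^m ≥ ∑ f(y_j^r)^m`. -/
theorem monogamy_of_convex_increasing_function
    {ι : Type*} [Fintype ι] (f : ℝ → ℝ)
    (hconv : ConvexOn ℝ (Set.Ici (0 : ℝ)) f)
    (hmonof : MonotoneOn f (Set.Ici (0 : ℝ)))
    (hf0 : ∀ x : ℝ, 0 ≤ x → 0 ≤ f x)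
    (r m : ℝ) (hr : 1 ≤ r) (hm : 1 ≤ m)
    (p : ι → ℝ) (hp : ∀ i, 0 ≤ p i) (hp1 : ∑ i, p i = 1)
    (c : ι → ℝ) (hc : ∀ i, 0 ≤ c i)
    (q : ℝ) (hq0 : 0 ≤ q) (hq : q ≤ ∑ i, p i * c i)
    (n : ℕ) (y : Fin n → ℝ) (hy : ∀ j, 0 ≤ y j)
    (hmono : ∑ j, y j ^ r ≤ q ^ r)
    (hsuper : ∑ j, f (y j ^ r) ^ m ≤ f (∑ j, y j ^ r) ^ m) :
    ∑ j, f (y j ^ r) ^ m ≤ (∑ i, p i * f (c i ^ r)) ^ m := by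
  have hr0 : (0 : ℝ) ≤ r := le_trans zero_le_one hr
  have hA : (0 : ℝ) ≤ ∑ j, y j ^ r :=
    Finset.sum_nonneg fun j _ => Real.rpow_nonneg (hy j) r
  have hqr : (0 : ℝ) ≤ q ^ r := Real.rpow_nonneg hq0 r
  have hS : (0 : ℝ) ≤ ∑ i, p i * c i :=
    Finset.sum_nonneg fun i _ => mul_nonneg (hp i) (hc i)
  have hSr : (0 : ℝ) ≤ ∑ i, p i * c i ^ r :=
    Finset.sum_nonneg fun i _ => mul_nonneg (hp i) (Real.rpow_nonneg (hc i) r)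
  -- step 1: f(∑ y^r) ≤ f(q^r)
  have h1 : f (∑ j, y j ^ r) ≤ f (q ^ r) := hmonof hA hqr hmono
  -- step 2: q^r ≤ (∑ p c)^r
  have h2 : q ^ r ≤ (∑ i, p i * c i) ^ r := Real.rpow_le_rpow hq0 hq hr0
  -- step 3: (∑ p c)^r ≤ ∑ p (c^r) by Jensen for rpow
  have h3 : (∑ i, p i * c i) ^ r ≤ ∑ i, p i * c i ^ r := by
    have := (convexOn_rpow hr).map_sum_le (t := Finset.univ)
      (fun i _ => hp i) hp1 (fun i _ => Set.mem_Ici.mpr (hc i))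
    simpa [smul_eq_mul] using this
  -- step 4: f(∑ p c^r) ≤ ∑ p f(c^r) by Jensen for f
  have h4 : f (∑ i, p i * c i ^ r) ≤ ∑ i, p i * f (c i ^ r) := by
    have := hconv.map_sum_le (t := Finset.univ)
      (fun i _ => hp i) hp1 (fun i _ => Set.mem_Ici.mpr (Real.rpow_nonneg (hc i) r))
    simpa [smul_eq_mul] using this
  have hchain : f (∑ j, y j ^ r) ≤ ∑ i, p i * f (c i ^ r) :=
    h1.trans ((hmonof hqr hSr (h2.trans h3)).trans h4)
  calc ∑ j, f (y j ^ r) ^ m ≤ f (∑ j, y j ^ r) ^ m := hsuper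
    _ ≤ (∑ i, p i * f (c i ^ r)) ^ m :=
      Real.rpow_le_rpow (hf0 _ hA) hchain (le_trans zero_le_one hm)
end

section
/- Let $f : \mathbb{R} \to \mathbb{R}$ be concave and monotone nonincreasing on $[0,\infty)$ with $f(x) \geq 0$ for $x \geq 0$, and let $r \geq 1$ and $m \geq 1$ be real numbers. Let $(p_i)_{i \in I}$ be a finite family of nonnegative weights with $\sum_i p_i = 1$, let $(c_i)_{i \in I}$ be nonnegative reals, let $q \geq 0$ satisfy $q \leq \sum_i p_i c_i$, and let $(y_j)_{j=1}^n$ be nonnegative reals satisfying $q^r \geq \sum_{j=1}^n y_j^r$ and the subadditivity condition $f\left(\sum_{j=1}^n y_j^r\right)^m \leq \sum_{j=1}^n f\left(y_j^r\right)^m$. Then $\left(\sum_{i \in I} p_i f(c_i^r)\right)^m \leq \sum_{j=1}^n f(y_j^r)^m$. -/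
/-- If `q^r` is monogamous and `Q = f (q^r)` for a monotonically decreasing concave
nonnegative function `f` satisfying the subadditivity condition
`f (∑ y_j^r)^m ≤ ∑ f (y_j^r)^m`, then `Q^m` is non-monogamous:
`(∑ p_i f(c_i^r))^m ≤ ∑ f(y_j^r)^m`. -/
theorem nonmonogamy_of_concave_decreasing_function
    {ι : Type*} [Fintype ι] (f : ℝ → ℝ)
    (hconc : ConcaveOn ℝ (Set.Ici (0 : ℝ)) f)
    (hantif : AntitoneOn f (Set.Ici (0 : ℝ)))
    (hf0 : ∀ x : ℝ, 0 ≤ x → 0 ≤ f x)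
    (r m : ℝ) (hr : 1 ≤ r) (hm : 1 ≤ m)
    (p : ι → ℝ) (hp : ∀ i, 0 ≤ p i) (hp1 : ∑ i, p i = 1)
    (c : ι → ℝ) (hc : ∀ i, 0 ≤ c i)
    (q : ℝ) (hq0 : 0 ≤ q) (hq : q ≤ ∑ i, p i * c i)
    (n : ℕ) (y : Fin n → ℝ) (hy : ∀ j, 0 ≤ y j)
    (hmono : ∑ j, y j ^ r ≤ q ^ r)
    (hsub : f (∑ j, y j ^ r) ^ m ≤ ∑ j, f (y j ^ r) ^ m) :
    (∑ i, p i * f (c i ^ r)) ^ m ≤ ∑ j, f (y j ^ r) ^ m := by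
  have hr0 : (0:ℝ) ≤ r := le_trans zero_le_one hr
  have hcr : ∀ i, c i ^ r ∈ Set.Ici (0:ℝ) := fun i => Real.rpow_nonneg (hc i) r
  -- Jensen for f
  have h1 : ∑ i, p i * f (c i ^ r) ≤ f (∑ i, p i * (c i ^ r)) := by
    simpa [smul_eq_mul] using
      hconc.le_map_sum (t := Finset.univ) (w := p) (p := fun i => c i ^ r)
        (fun i _ => hp i) hp1 (fun i _ => hcr i)
  -- Jensen for rpow
  have h2 : (∑ i, p i * c i) ^ r ≤ ∑ i, p i * (c i ^ r) := by
    simpa [smul_eq_mul] using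
      (convexOn_rpow hr).map_sum_le (t := Finset.univ) (w := p) (p := c)
        (fun i _ => hp i) hp1 (fun i _ => hc i)
  have hpc0 : (0:ℝ) ≤ ∑ i, p i * c i := le_trans hq0 hq
  have hsum0 : (0:ℝ) ≤ ∑ i, p i * (c i ^ r) :=
    Finset.sum_nonneg fun i _ => mul_nonneg (hp i) (hcr i)
  have hy0 : (0:ℝ) ≤ ∑ j, y j ^ r :=
    Finset.sum_nonneg fun j _ => Real.rpow_nonneg (hy j) r
  have h3 : f (∑ i, p i * (c i ^ r)) ≤ f ((∑ i, p i * c i) ^ r) :=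
    hantif (Real.rpow_nonneg hpc0 r) hsum0 h2
  have h4 : f ((∑ i, p i * c i) ^ r) ≤ f (q ^ r) :=
    hantif (Real.rpow_nonneg hq0 r) (Real.rpow_nonneg hpc0 r)
      (Real.rpow_le_rpow hq0 hq hr0)
  have h5 : f (q ^ r) ≤ f (∑ j, y j ^ r) := hantif hy0 (Real.rpow_nonneg hq0 r) hmono
  have hA0 : (0:ℝ) ≤ ∑ i, p i * f (c i ^ r) :=
    Finset.sum_nonneg fun i _ => mul_nonneg (hp i) (hf0 _ (hcr i))
  calc (∑ i, p i * f (c i ^ r)) ^ m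
      ≤ f (∑ j, y j ^ r) ^ m :=
        Real.rpow_le_rpow hA0 (h1.trans (h3.trans (h4.trans h5))) (le_trans zero_le_one hm)
    _ ≤ ∑ j, f (y j ^ r) ^ m := hsub
end

section
/- Let $h(x) = -x \log_2 x - (1-x)\log_2(1-x)$ for $x \in (0,1)$ with $h(0)=h(1)=0$, and define $E(x) = h\left(\frac{1+\sqrt{1-x}}{2}\right)$ for $x \in [0,1]$. Then $x \mapsto E(x)^2$ is convex on $[0,1]$: for all $x, y \in [0,1]$ and $t \in [0,1]$, $E(tx + (1-t)y)^2 \leq t\,E(x)^2 + (1-t)\,E(y)^2$. -/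
/-- The Shannon binary entropy `h(x) = -x log₂ x - (1-x) log₂(1-x)`.
(With Mathlib's convention `log 0 = 0`, this automatically satisfies
`h 0 = 0` and `h 1 = 0`.) -/
noncomputable def binaryEntropy (x : ℝ) : ℝ :=
  -x * Real.logb 2 x - (1 - x) * Real.logb 2 (1 - x)

/-- Entanglement of formation as a function of the squared concurrence:
`E(x) = h((1 + √(1-x))/2)`. -/
noncomputable def eofOfSqConc (x : ℝ) : ℝ :=
  binaryEntropy ((1 + Real.sqrt (1 - x)) / 2)


/-!
Write `s = √(1 - x)` and let `g(s) = h((1 + s)/2)` in nats. Since `g' = -L/2` with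
`L(s) = log ((1 + s)/(1 - s))`, the chain rule gives `d/dx g(√(1 - x))² = g(s) L(s) / (2s)`, so
convexity in `x` amounts to `s ↦ g(s) L(s) / (2s)` being antitone on `(0, 1)`. Its derivative has
the sign of `g (2s - (1 - s²) L) - s (1 - s²) L² / 2`, which is nonpositive by two elementary
bounds: `2s ≤ L(s)` (the first term of the artanh series) and `s g(s) ≤ (1 - s²) L(s) / 2`
(from `s log 2 ≤ log (1 + s)` and `s ≤ -log (1 - s)`).
-/

open Real Set

/-- The entropy, in nats, of a coin with bias `s`, i.e. with probabilities `(1 ± s)/2`. -/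
noncomputable def biasEntropy (s : ℝ) : ℝ := binEntropy ((1 + s) / 2)

/-- The log-odds `log ((1 + s)/(1 - s)) = 2 artanh s` of a coin with bias `s`. -/
noncomputable def biasLogit (s : ℝ) : ℝ := log (1 + s) - log (1 - s)

lemma biasEntropy_eq (s : ℝ) :
    biasEntropy s = log 2 - ((1 + s) * log (1 + s) + (1 - s) * log (1 - s)) / 2 := by
  have key (x : ℝ) : x / 2 * log (x / 2)⁻¹ = (x * log 2 - x * log x) / 2 := by
    rcases eq_or_ne x 0 with rfl | hx
    · simp
    · rw [log_inv, log_div hx two_ne_zero]; ring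
  rw [biasEntropy, binEntropy, show 1 - (1 + s) / 2 = (1 - s) / 2 by ring, key, key]
  ring

lemma biasEntropy_nonneg {s : ℝ} (hs₀ : -1 ≤ s) (hs₁ : s ≤ 1) : 0 ≤ biasEntropy s :=
  binEntropy_nonneg (by linarith) (by linarith)

lemma two_mul_le_biasLogit {s : ℝ} (hs₀ : 0 ≤ s) (hs₁ : s < 1) : 2 * s ≤ biasLogit s := by
  have hsum := hasSum_log_sub_log_of_abs_lt_one (abs_lt.2 ⟨by linarith, hs₁⟩)
  simpa [biasLogit] using le_hasSum hsum 0 fun k _ ↦ by positivity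

lemma mul_biasEntropy_le {s : ℝ} (hs₀ : 0 ≤ s) (hs₁ : s < 1) :
    s * biasEntropy s ≤ (1 - s ^ 2) * biasLogit s / 2 := by
  have hlog_one_add : s * log 2 ≤ log (1 + s) := by
    have h := rpow_one_add_le_one_add_mul_self (s := 1) (by norm_num) hs₀ hs₁.le
    rw [← log_rpow two_pos]
    exact log_le_log (by positivity) (by norm_num at h ⊢; linarith)
  have hlog_one_sub : s ≤ -log (1 - s) := by
    linarith [log_le_sub_one_of_pos (by linarith : 0 < 1 - s)]
  have hlog_two : log 2 ≤ 1 := by linarith [log_le_sub_one_of_pos two_pos]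
  rw [biasEntropy_eq, biasLogit]
  nlinarith [mul_le_mul_of_nonneg_left hlog_one_add (by linarith : 0 ≤ 1 + s),
    mul_le_mul_of_nonneg_left hlog_one_sub (by linarith : 0 ≤ 1 - s),
    mul_nonneg (mul_nonneg hs₀ (by linarith : 0 ≤ 1 - s)) (sub_nonneg.2 hlog_two)]

lemma biasEntropy_mul_sub_le {s : ℝ} (hs₀ : 0 ≤ s) (hs₁ : s < 1) :
    biasEntropy s * (2 * s - (1 - s ^ 2) * biasLogit s) ≤
      s * (1 - s ^ 2) * biasLogit s ^ 2 / 2 := by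
  have hL := two_mul_le_biasLogit hs₀ hs₁
  have hg := biasEntropy_nonneg (by linarith) hs₁.le
  calc biasEntropy s * (2 * s - (1 - s ^ 2) * biasLogit s)
      = biasEntropy s * (2 * s - biasLogit s) + s * biasLogit s * (s * biasEntropy s) := by ring
    _ ≤ 0 + s * biasLogit s * ((1 - s ^ 2) * biasLogit s / 2) :=
        add_le_add (mul_nonpos_of_nonneg_of_nonpos hg (by linarith))
          (mul_le_mul_of_nonneg_left (mul_biasEntropy_le hs₀ hs₁) (by nlinarith))
    _ = s * (1 - s ^ 2) * biasLogit s ^ 2 / 2 := by ring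

lemma hasDerivAt_biasEntropy {s : ℝ} (hs₀ : -1 < s) (hs₁ : s < 1) :
    HasDerivAt biasEntropy (-biasLogit s / 2) s := by
  have h := (hasDerivAt_binEntropy (p := (1 + s) / 2) (by linarith) (by linarith)).comp s
    (((hasDerivAt_id s).const_add 1).div_const 2)
  refine h.congr_deriv ?_
  rw [show 1 - (1 + s) / 2 = (1 - s) / 2 by ring, log_div (by linarith) two_ne_zero,
    log_div (by linarith) two_ne_zero, biasLogit]
  ring

lemma hasDerivAt_biasLogit {s : ℝ} (hs₀ : -1 < s) (hs₁ : s < 1) :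
    HasDerivAt biasLogit (2 / (1 - s ^ 2)) s := by
  have h := (((hasDerivAt_id s).const_add 1).log (by simp only [id]; linarith)).sub
    (((hasDerivAt_id s).const_sub 1).log (by simp only [id]; linarith))
  refine h.congr_deriv ?_
  have : 1 - s ≠ 0 := by linarith
  have : 1 + s ≠ 0 := by linarith
  simp only [id]
  rw [show 1 - s ^ 2 = (1 + s) * (1 - s) by ring]
  field_simp
  ring

lemma antitoneOn_biasEntropy_mul_biasLogit_div :
    AntitoneOn (fun s ↦ biasEntropy s * biasLogit s / (2 * s)) (Ioo 0 1) := by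
  have hderiv : ∀ s ∈ Ioo (0 : ℝ) 1, HasDerivAt (fun s ↦ biasEntropy s * biasLogit s / (2 * s))
      (2 / (1 - s ^ 2) * (biasEntropy s * (2 * s - (1 - s ^ 2) * biasLogit s) -
        s * (1 - s ^ 2) * biasLogit s ^ 2 / 2) / (2 * s) ^ 2) s := by
    rintro s ⟨hs₀, hs₁⟩
    have h := ((hasDerivAt_biasEntropy (by linarith) hs₁).mul
      (hasDerivAt_biasLogit (by linarith) hs₁)).div
      ((hasDerivAt_id s).const_mul 2) (by positivity)
    refine h.congr_deriv ?_
    have : 1 - s ^ 2 ≠ 0 := by nlinarith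
    simp only [id, Pi.mul_apply]
    field_simp
    ring
  refine antitoneOn_of_hasDerivWithinAt_nonpos (convex_Ioo 0 1)
    (fun s hs ↦ (hderiv s hs).continuousAt.continuousWithinAt)
    (fun s hs ↦ (hderiv s (interior_subset hs)).hasDerivWithinAt) ?_
  rintro s hs
  obtain ⟨hs₀, hs₁⟩ := interior_subset hs
  have : 0 < 1 - s ^ 2 := by nlinarith
  exact div_nonpos_of_nonpos_of_nonneg (mul_nonpos_of_nonneg_of_nonpos (by positivity)
    (sub_nonpos.2 (biasEntropy_mul_sub_le hs₀.le hs₁))) (sq_nonneg _)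

lemma hasDerivAt_sq_biasEntropy_sqrt_one_sub {x : ℝ} (hx₀ : 0 < x) (hx₁ : x < 1) :
    HasDerivAt (fun x ↦ biasEntropy √(1 - x) ^ 2)
      (biasEntropy √(1 - x) * biasLogit √(1 - x) / (2 * √(1 - x))) x := by
  have hpos : 0 < √(1 - x) := sqrt_pos.2 (by linarith)
  have hlt : √(1 - x) < 1 := by rw [sqrt_lt' one_pos]; linarith
  have h := ((hasDerivAt_biasEntropy (by linarith) hlt).comp x
    ((hasDerivAt_sqrt (sub_pos.2 hx₁).ne').comp x ((hasDerivAt_id x).const_sub 1))).pow 2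
  refine h.congr_deriv ?_
  simp only [Function.comp_apply]
  field_simp
  ring

lemma convexOn_sq_biasEntropy_sqrt_one_sub :
    ConvexOn ℝ (Icc 0 1) (fun x ↦ biasEntropy √(1 - x) ^ 2) := by
  have hmem {x : ℝ} (hx : x ∈ Ioo 0 1) : √(1 - x) ∈ Ioo 0 1 :=
    ⟨sqrt_pos.2 (by linarith [hx.2]), by rw [sqrt_lt' one_pos]; linarith [hx.1]⟩
  refine MonotoneOn.convexOn_of_deriv (convex_Icc 0 1)
    (by unfold biasEntropy; fun_prop) ?_ ?_ <;> rw [interior_Icc]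
  · exact fun x hx ↦ (hasDerivAt_sq_biasEntropy_sqrt_one_sub hx.1 hx.2).differentiableAt
      |>.differentiableWithinAt
  · intro x hx y hy hxy
    rw [(hasDerivAt_sq_biasEntropy_sqrt_one_sub hx.1 hx.2).deriv,
      (hasDerivAt_sq_biasEntropy_sqrt_one_sub hy.1 hy.2).deriv]
    exact antitoneOn_biasEntropy_mul_biasLogit_div (hmem hy) (hmem hx)
      (sqrt_le_sqrt (by linarith))

lemma eofOfSqConc_eq (x : ℝ) : eofOfSqConc x = biasEntropy √(1 - x) / log 2 := by
  rw [eofOfSqConc, binaryEntropy, biasEntropy, binEntropy, logb, logb, log_inv, log_inv]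
  ring

lemma convexOn_sq_eofOfSqConc : ConvexOn ℝ (Icc 0 1) (fun x ↦ eofOfSqConc x ^ 2) := by
  simpa only [eofOfSqConc_eq, div_eq_inv_mul, mul_pow, inv_pow, smul_eq_mul] using
    convexOn_sq_biasEntropy_sqrt_one_sub.smul (c := (log 2 ^ 2)⁻¹) (by positivity)

/-- `x ↦ E(x)²` is convex on `[0,1]`. -/
theorem sq_eofOfSqConc_convexOn :
    ∀ x y t : ℝ, x ∈ Set.Icc (0:ℝ) 1 → y ∈ Set.Icc (0:ℝ) 1 → t ∈ Set.Icc (0:ℝ) 1 →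
      eofOfSqConc (t * x + (1 - t) * y) ^ 2 ≤
        t * eofOfSqConc x ^ 2 + (1 - t) * eofOfSqConc y ^ 2 := by
  intro x y t hx hy ht
  simpa only [smul_eq_mul] using
    convexOn_sq_eofOfSqConc.2 hx hy ht.1 (sub_nonneg.2 ht.2) (by ring)
end

section
/- Let $h(x) = -x \log_2 x - (1-x)\log_2(1-x)$ for $x \in (0,1)$ with $h(0)=h(1)=0$, and define $E(x) = h\left(\frac{1+\sqrt{1-x}}{2}\right)$ for $x \in [0,1]$. Then $E^2$ is superadditive on $[0,1]$: for all $x, y \geq 0$ with $x + y \leq 1$, $E(x+y)^2 \geq E(x)^2 + E(y)^2$. -/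
/-!
A function `g` with `g 0 = 0` for which `g x / x` is nondecreasing is superadditive, so it
suffices that `E² / x` is nondecreasing, i.e. that `E ≤ 2 x E'`. In the variable
`t = √(1 - x)` this becomes `2 t log 2 ≤ (1 + t) log (1 + t) - (1 - t) log (1 - t)`, which says
that the right-hand side, a concave function of `t` on `[0, 1]`, lies above its chord.
-/

open Real Set

theorem superadditive_of_monotoneOn_div_self {g : ℝ → ℝ} {a : ℝ} (h0 : g 0 = 0)
    (hg : MonotoneOn (fun x => g x / x) (Ioc 0 a)) {x y : ℝ} (hx : 0 ≤ x) (hy : 0 ≤ y)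
    (hxy : x + y ≤ a) : g x + g y ≤ g (x + y) := by
  rcases hx.eq_or_lt with rfl | hx
  · simp [h0]
  rcases hy.eq_or_lt with rfl | hy
  · simp [h0]
  have hsum : x + y ∈ Ioc 0 a := ⟨by positivity, hxy⟩
  have hle : ∀ z, 0 < z → z ≤ x + y → g z ≤ g (x + y) / (x + y) * z := fun z hz hzs =>
    (div_le_iff₀ hz).1 (hg ⟨hz, hzs.trans hxy⟩ hsum hzs)
  calc g x + g y ≤ g (x + y) / (x + y) * x + g (x + y) / (x + y) * y :=
        add_le_add (hle x hx (by linarith)) (hle y hy (by linarith))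
    _ = g (x + y) := by field_simp

theorem monotoneOn_sq_div_self_of_le_two_mul_deriv {f f' : ℝ → ℝ} {a : ℝ}
    (hf : ContinuousOn f (Ioc 0 a)) (hderiv : ∀ x ∈ Ioo 0 a, HasDerivAt f (f' x) x)
    (hnonneg : ∀ x ∈ Ioo 0 a, 0 ≤ f x) (hle : ∀ x ∈ Ioo 0 a, f x ≤ 2 * x * f' x) :
    MonotoneOn (fun x => f x ^ 2 / x) (Ioc 0 a) := by
  refine monotoneOn_of_hasDerivWithinAt_nonneg (f' := fun x => f x * (2 * x * f' x - f x) / x ^ 2)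
    (convex_Ioc 0 a) ((hf.pow 2).div continuousOn_id fun x hx => hx.1.ne') (fun x hx => ?_)
    (fun x hx => ?_)
  all_goals rw [interior_Ioc] at hx
  · exact (((hderiv x hx).pow 2).div (hasDerivAt_id x) hx.1.ne').hasDerivWithinAt.congr_deriv
      (by
        simp only [Nat.cast_ofNat, Nat.add_one_sub_one, pow_one, id_eq, Pi.pow_apply, mul_one]
        ring)
  · exact div_nonneg (mul_nonneg (hnonneg x hx) (sub_nonneg.2 (hle x hx))) (sq_nonneg x)

theorem concaveOn_mul_log_one_add_sub_mul_log_one_sub :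
    ConcaveOn ℝ (Icc 0 1) fun t => (1 + t) * log (1 + t) - (1 - t) * log (1 - t) := by
  have hderiv : ∀ t ∈ Ioo (0 : ℝ) 1, HasDerivAt
      (fun t => (1 + t) * log (1 + t) - (1 - t) * log (1 - t)) (log (1 - t ^ 2) + 2) t := by
    intro t ht
    have h₁ := (hasDerivAt_mul_log (by linarith [ht.1] : (1 + t) ≠ 0)).comp t
      ((hasDerivAt_id t).const_add 1)
    have h₂ := (hasDerivAt_mul_log (by linarith [ht.2] : (1 - t) ≠ 0)).comp t
      ((hasDerivAt_id t).const_sub 1)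
    refine (h₁.sub h₂).congr_deriv ?_
    rw [show 1 - t ^ 2 = (1 + t) * (1 - t) by ring,
      log_mul (by linarith [ht.1]) (by linarith [ht.2])]
    ring
  refine AntitoneOn.concaveOn_of_deriv (convex_Icc 0 1)
    ((continuous_const.add continuous_id).mul_log.sub
      (continuous_const.sub continuous_id).mul_log).continuousOn
    (fun t ht => ?_) (fun s hs t ht hst => ?_)
  all_goals rw [interior_Icc] at *
  · exact (hderiv t ht).differentiableAt.differentiableWithinAt
  · rw [(hderiv s hs).deriv, (hderiv t ht).deriv]
    gcongr
    · nlinarith [ht.2, ht.1]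
    · nlinarith [hs.1]

theorem two_mul_log_two_mul_le_mul_log_one_add_sub_mul_log_one_sub {t : ℝ} (ht0 : 0 ≤ t)
    (ht1 : t ≤ 1) :
    2 * log 2 * t ≤ (1 + t) * log (1 + t) - (1 - t) * log (1 - t) := by
  have := concaveOn_mul_log_one_add_sub_mul_log_one_sub.2 (x := 0) (y := 1)
    (by simp) (by simp) (sub_nonneg.2 ht1) ht0 (by ring)
  norm_num at this
  linarith

theorem binaryEntropy_eq_binEntropy_div (x : ℝ) : binaryEntropy x = binEntropy x / log 2 := by
  rw [binaryEntropy, binEntropy, logb, logb, log_inv, log_inv]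
  ring

theorem binEntropy_one_add_div_two {t : ℝ} (ht0 : -1 < t) (ht1 : t < 1) :
    binEntropy ((1 + t) / 2) = log 2 - ((1 + t) * log (1 + t) + (1 - t) * log (1 - t)) / 2 := by
  rw [binEntropy, show 1 - (1 + t) / 2 = (1 - t) / 2 by ring, inv_div, inv_div,
    log_div two_ne_zero (by linarith), log_div two_ne_zero (by linarith)]
  ring

theorem eofOfSqConc_eq_binEntropy_div (x : ℝ) :
    eofOfSqConc x = binEntropy ((1 + √(1 - x)) / 2) / log 2 :=
  binaryEntropy_eq_binEntropy_div _

theorem continuous_eofOfSqConc : Continuous eofOfSqConc := by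
  simp only [funext eofOfSqConc_eq_binEntropy_div]
  exact (binEntropy_continuous.comp (by fun_prop)).div_const _

theorem eofOfSqConc_zero : eofOfSqConc 0 = 0 := by
  simp [eofOfSqConc, binaryEntropy]

theorem eofOfSqConc_nonneg {x : ℝ} (hx : 0 ≤ x) : 0 ≤ eofOfSqConc x := by
  rw [eofOfSqConc_eq_binEntropy_div]
  have : √(1 - x) ≤ 1 := sqrt_le_one.2 (by linarith)
  exact div_nonneg (binEntropy_nonneg (by positivity) (by linarith)) (log_nonneg one_le_two)

theorem sqrt_one_sub_mem_Ioo {x : ℝ} (hx : x ∈ Ioo 0 1) : √(1 - x) ∈ Ioo 0 1 :=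
  ⟨sqrt_pos.2 (by linarith [hx.2]), (sqrt_lt' one_pos).2 (by linarith [hx.1])⟩

noncomputable def eofOfSqConcDeriv (x : ℝ) : ℝ :=
  (log (1 + √(1 - x)) - log (1 - √(1 - x))) / (4 * √(1 - x) * log 2)

theorem hasDerivAt_eofOfSqConc {x : ℝ} (hx : x ∈ Ioo 0 1) :
    HasDerivAt eofOfSqConc (eofOfSqConcDeriv x) x := by
  obtain ⟨ht0, ht1⟩ := sqrt_one_sub_mem_Ioo hx
  have hp : HasDerivAt (fun y => (1 + √(1 - y)) / 2) (-1 / (4 * √(1 - x))) x := by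
    refine ((((hasDerivAt_id x).const_sub 1).sqrt ?_).const_add 1 |>.div_const 2).congr_deriv ?_
    · simp only [id]; linarith [hx.2]
    · simp only [id]; ring
  have hH := hasDerivAt_binEntropy (p := (1 + √(1 - x)) / 2) (by positivity) (by linarith)
  rw [funext eofOfSqConc_eq_binEntropy_div]
  refine ((hH.comp x hp).div_const _).congr_deriv ?_
  rw [eofOfSqConcDeriv, show 1 - (1 + √(1 - x)) / 2 = (1 - √(1 - x)) / 2 by ring,
    log_div (by linarith) two_ne_zero, log_div (by linarith) two_ne_zero]
  field_simp
  ring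

theorem eofOfSqConc_le_two_mul_mul_deriv {x : ℝ} (hx : x ∈ Ioo 0 1) :
    eofOfSqConc x ≤ 2 * x * eofOfSqConcDeriv x := by
  obtain ⟨ht0, ht1⟩ := sqrt_one_sub_mem_Ioo hx
  have hx' : x = 1 - √(1 - x) ^ 2 := by rw [sq_sqrt (by linarith [hx.2])]; ring
  have hchord := two_mul_log_two_mul_le_mul_log_one_add_sub_mul_log_one_sub ht0.le ht1.le
  rw [← sub_nonneg, eofOfSqConcDeriv, eofOfSqConc_eq_binEntropy_div,
    binEntropy_one_add_div_two (by linarith) ht1]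
  generalize √(1 - x) = t at *
  subst hx'
  refine (div_nonneg (sub_nonneg.2 hchord) (by positivity : 0 ≤ 2 * t * log 2)).trans_eq ?_
  field_simp
  ring

/-- `E²` is superadditive on `[0,1]`: `E(x+y)² ≥ E(x)² + E(y)²`. -/
theorem sq_eofOfSqConc_superadditive :
    ∀ x y : ℝ, 0 ≤ x → 0 ≤ y → x + y ≤ 1 →
      eofOfSqConc x ^ 2 + eofOfSqConc y ^ 2 ≤ eofOfSqConc (x + y) ^ 2 := by
  intro x y hx hy hxy
  have hmono : MonotoneOn (fun x => eofOfSqConc x ^ 2 / x) (Ioc 0 1) :=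
    monotoneOn_sq_div_self_of_le_two_mul_deriv continuous_eofOfSqConc.continuousOn
      (fun _ hx => hasDerivAt_eofOfSqConc hx) (fun _ hx => eofOfSqConc_nonneg hx.1.le)
      (fun _ hx => eofOfSqConc_le_two_mul_mul_deriv hx)
  exact superadditive_of_monotoneOn_div_self (g := fun x => eofOfSqConc x ^ 2)
    (by simp [eofOfSqConc_zero]) hmono hx hy hxy
end

section
/- Let $m \geq 1$ be an integer, let $1 \leq r \leq \alpha$ be real numbers, and let $Q, b, c_1, \dots, c_m, T_1, \dots, T_m$ be real numbers in $[0,1]$ satisfying $Q^r \geq b^r + T_1^r$ and $T_k^r \geq c_k^r + T_{k+1}^r$ for every $1 \leq k \leq m-1$. Then for every $1 \leq k \leq m$: $Q^{\alpha} \geq b^{\alpha} + \sum_{j=1}^{k-1} c_j^{\alpha} + T_k^{\alpha}$. (Hierarchical monogamy relations.) -/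
lemma rpow_superadd {u v p : ℝ} (hu : 0 ≤ u) (hv : 0 ≤ v) (hp : 1 ≤ p) :
    u ^ p + v ^ p ≤ (u + v) ^ p := by
  have h := NNReal.add_rpow_le_rpow_add u.toNNReal v.toNNReal hp
  have h2 := (NNReal.coe_le_coe).2 h
  push_cast [NNReal.coe_rpow, Real.coe_toNNReal _ hu, Real.coe_toNNReal _ hv,
    Real.coe_toNNReal _ (add_nonneg hu hv)] at h2
  exact h2

/-- **Hierarchical monogamy relations.** If `Q^r ≥ b^r + T₁^r` and
`T_k^r ≥ c_k^r + T_{k+1}^r` for `1 ≤ k ≤ m-1`, all quantities lying in `[0,1]`,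
then for every `1 ≤ k ≤ m` and every `α ≥ r ≥ 1`,
`Q^α ≥ b^α + ∑_{j=1}^{k-1} c_j^α + T_k^α`. -/
theorem hierarchical_monogamy
    (m : ℕ) (hm : 1 ≤ m) (r α : ℝ) (hr : 1 ≤ r) (hα : r ≤ α)
    (Q b : ℝ) (c T : ℕ → ℝ)
    (hQ : Q ∈ Set.Icc (0:ℝ) 1) (hb : b ∈ Set.Icc (0:ℝ) 1)
    (hc : ∀ j, 1 ≤ j → j ≤ m → c j ∈ Set.Icc (0:ℝ) 1)
    (hT : ∀ k, 1 ≤ k → k ≤ m → T k ∈ Set.Icc (0:ℝ) 1)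
    (h1 : b ^ r + T 1 ^ r ≤ Q ^ r)
    (hstep : ∀ k, 1 ≤ k → k ≤ m - 1 → c k ^ r + T (k + 1) ^ r ≤ T k ^ r) :
    ∀ k, 1 ≤ k → k ≤ m →
      b ^ α + ∑ j ∈ Finset.Icc 1 (k - 1), c j ^ α + T k ^ α ≤ Q ^ α := by
  have hr0 : (0:ℝ) < r := lt_of_lt_of_le one_pos hr
  have hs : 1 ≤ α / r := (one_le_div hr0).mpr hα
  have hs0 : 0 ≤ α / r := le_trans zero_le_one hs
  have ex : ∀ w : ℝ, 0 ≤ w → w ^ α = (w ^ r) ^ (α / r) := by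
    intro w hw
    rw [← Real.rpow_mul hw]
    congr 1
    field_simp
  have key : ∀ x y z : ℝ, 0 ≤ x → 0 ≤ y → 0 ≤ z →
      x ^ r + y ^ r ≤ z ^ r → x ^ α + y ^ α ≤ z ^ α := by
    intro x y z hx hy hz h
    rw [ex x hx, ex y hy, ex z hz]
    calc (x ^ r) ^ (α / r) + (y ^ r) ^ (α / r)
        ≤ (x ^ r + y ^ r) ^ (α / r) :=
          rpow_superadd (Real.rpow_nonneg hx r) (Real.rpow_nonneg hy r) hs
      _ ≤ (z ^ r) ^ (α / r) :=
          Real.rpow_le_rpow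
            (add_nonneg (Real.rpow_nonneg hx r) (Real.rpow_nonneg hy r)) h hs0
  intro k hk1 hkm
  induction k, hk1 using Nat.le_induction with
  | base =>
    have : Finset.Icc 1 (1 - 1) = (∅ : Finset ℕ) := by decide
    rw [this, Finset.sum_empty, add_zero]
    exact key b (T 1) Q hb.1 (hT 1 le_rfl hm).1 hQ.1 h1
  | succ k hk ih =>
    obtain ⟨n, rfl⟩ : ∃ n, k = n + 1 := ⟨k - 1, by omega⟩
    have hkm' : n + 1 ≤ m := by omega
    have ihres := ih hkm'
    have step : c (n + 1) ^ α + T (n + 1 + 1) ^ α ≤ T (n + 1) ^ α :=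
      key _ _ _ (hc (n + 1) (by omega) hkm').1 (hT (n + 1 + 1) (by omega) (by omega)).1
        (hT (n + 1) (by omega) hkm').1 (hstep (n + 1) (by omega) (by omega))
    have hIcc : (n + 1 + 1 - 1) = n + 1 := by omega
    have hIcc' : (n + 1 - 1) = n := by omega
    rw [hIcc, Finset.sum_Icc_succ_top (by omega : 1 ≤ n + 1)]
    rw [hIcc'] at ihres
    linarith [step, ihres]
end

section
/- Let $\iota$ be a finite type with $n = |\iota| \geq 2$ elements, and let $f$ be a function from subsets of $\iota$ to the nonnegative reals that is superadditive on disjoint nonempty sets: $f(X \cup Y) \geq f(X) + f(Y)$ whenever $X, Y$ are disjoint nonempty subsets of $\iota$. Then $(2^{n-1}-1)\, f(\iota) \;\geq\; \sum_{\emptyset \neq X \subsetneq \iota} f(X) \;\geq\; (2^{n-1}-1) \sum_{j \in \iota} f(\{j\})$, where the middle sum runs over all nonempty proper subsets $X$ of $\iota$. (Strong monogamy inequality.) -/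
/-!
Fix a point `j`. Pairing each nonempty proper subset containing `j` with its complement, and
using `f X + f Xᶜ ≤ f ι`, bounds the middle sum by `(2^(n-1) - 1) f(ι)`, since exactly
`2^(n-1) - 1` nonempty proper subsets contain `j`. The same count, with
`∑_{j ∈ X} f {j} ≤ f X` from iterated superadditivity, gives the lower bound after exchanging
the order of summation.
-/

open Finset

section Superadditive

variable {ι M : Type*} [DecidableEq ι] [AddCommMonoid M] [PartialOrder M] [IsOrderedAddMonoid M]

def SuperadditiveOnNonempty (f : Finset ι → M) : Prop :=
  ∀ X Y : Finset ι, Disjoint X Y → X.Nonempty → Y.Nonempty → f X + f Y ≤ f (X ∪ Y)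

theorem SuperadditiveOnNonempty.sum_singleton_le {f : Finset ι → M}
    (hf : SuperadditiveOnNonempty f) {X : Finset ι} (hX : X.Nonempty) :
    ∑ j ∈ X, f {j} ≤ f X := by
  induction hX using Nonempty.cons_induction with
  | singleton a => simp
  | cons a s ha hs ih =>
    rw [sum_cons, cons_eq_insert, insert_eq]
    calc f {a} + ∑ j ∈ s, f {j} ≤ f {a} + f s := by gcongr
      _ ≤ f ({a} ∪ s) := hf _ _ (disjoint_singleton_left.mpr ha) (singleton_nonempty a) hs

end Superadditive

def properNonemptySubsets (ι : Type*) [Fintype ι] [DecidableEq ι] : Finset (Finset ι) :=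
  {X ∈ univ.powerset | X.Nonempty ∧ X ≠ univ}

section ProperNonemptySubsets

variable {ι M : Type*} [Fintype ι] [DecidableEq ι]

theorem mem_properNonemptySubsets {X : Finset ι} :
    X ∈ properNonemptySubsets ι ↔ X.Nonempty ∧ X ≠ univ := by
  simp [properNonemptySubsets]

@[simp]
theorem compl_mem_properNonemptySubsets {X : Finset ι} :
    Xᶜ ∈ properNonemptySubsets ι ↔ X ∈ properNonemptySubsets ι := by
  simp [mem_properNonemptySubsets, nonempty_iff_ne_empty, and_comm]

theorem card_filter_mem_properNonemptySubsets (j : ι) :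
    #{X ∈ properNonemptySubsets ι | j ∈ X} = 2 ^ (Fintype.card ι - 1) - 1 := by
  have hcard : #((univ.erase j).powerset.erase ∅) = 2 ^ (Fintype.card ι - 1) - 1 := by
    rw [card_erase_of_mem (empty_mem_powerset _), card_powerset, card_erase_of_mem (mem_univ j),
      card_univ]
  rw [← hcard]
  refine card_nbij' compl compl (fun X hX => ?_) (fun X hX => ?_) (fun X _ => compl_compl X)
    (fun X _ => compl_compl X) <;>
  · simp only [mem_coe, mem_filter, mem_erase, mem_powerset, mem_properNonemptySubsets,
      subset_erase] at hX ⊢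
    grind [nonempty_iff_ne_empty, compl_eq_empty_iff, compl_eq_univ_iff, mem_compl]

variable [AddCommMonoid M]

theorem sum_properNonemptySubsets_eq_sum_add_compl (f : Finset ι → M) (j : ι) :
    ∑ X ∈ properNonemptySubsets ι, f X
      = ∑ X ∈ properNonemptySubsets ι with j ∈ X, (f X + f Xᶜ) := by
  rw [sum_add_distrib, ← sum_filter_add_sum_filter_not _ (j ∈ ·)]
  congr 1
  refine sum_nbij' compl compl (fun X hX => ?_) (fun X hX => ?_) (fun X _ => compl_compl X)
    (fun X _ => compl_compl X) (fun X _ => by rw [compl_compl])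
  all_goals simp_all

theorem sum_sum_properNonemptySubsets (g : ι → M) :
    ∑ X ∈ properNonemptySubsets ι, ∑ j ∈ X, g j = (2 ^ (Fintype.card ι - 1) - 1) • ∑ j, g j := by
  rw [sum_comm' (t' := univ) (s' := fun j => {X ∈ properNonemptySubsets ι | j ∈ X})
    (fun X j => by simp [and_comm]), smul_sum]
  simp_rw [sum_const, card_filter_mem_properNonemptySubsets]

variable [PartialOrder M] {f : Finset ι → M}

theorem SuperadditiveOnNonempty.add_compl_le (hf : SuperadditiveOnNonempty f) {X : Finset ι}
    (hX : X ∈ properNonemptySubsets ι) : f X + f Xᶜ ≤ f univ := by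
  have hXc := compl_mem_properNonemptySubsets.mpr hX
  rw [mem_properNonemptySubsets] at hX hXc
  simpa using hf X Xᶜ disjoint_compl_right hX.1 hXc.1

variable [IsOrderedAddMonoid M]

theorem SuperadditiveOnNonempty.sum_properNonemptySubsets_le (hf : SuperadditiveOnNonempty f) :
    ∑ X ∈ properNonemptySubsets ι, f X ≤ (2 ^ (Fintype.card ι - 1) - 1) • f univ := by
  cases isEmpty_or_nonempty ι with
  | inl _ => simp [properNonemptySubsets, filter_singleton]
  | inr hι =>
    obtain ⟨j⟩ := hι
    rw [sum_properNonemptySubsets_eq_sum_add_compl f j, ← card_filter_mem_properNonemptySubsets j,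
      ← sum_const]
    exact sum_le_sum fun X hX => hf.add_compl_le (mem_filter.mp hX).1

theorem SuperadditiveOnNonempty.smul_sum_singleton_le (hf : SuperadditiveOnNonempty f) :
    (2 ^ (Fintype.card ι - 1) - 1) • ∑ j, f {j} ≤ ∑ X ∈ properNonemptySubsets ι, f X := by
  rw [← sum_sum_properNonemptySubsets]
  exact sum_le_sum fun X hX => hf.sum_singleton_le (mem_properNonemptySubsets.mp hX).1

end ProperNonemptySubsets

theorem strong_monogamy_general
    {ι : Type*} [Fintype ι] [DecidableEq ι]
    (f : Finset ι → ℝ)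
    (hsuper : ∀ X Y : Finset ι, Disjoint X Y → X.Nonempty → Y.Nonempty →
      f X + f Y ≤ f (X ∪ Y)) :
    (∑ X ∈ Finset.univ.powerset.filter
        (fun X : Finset ι => X.Nonempty ∧ X ≠ Finset.univ), f X
      ≤ ((2 : ℝ) ^ (Fintype.card ι - 1) - 1) * f Finset.univ)
    ∧ (((2 : ℝ) ^ (Fintype.card ι - 1) - 1) * ∑ j, f {j}
      ≤ ∑ X ∈ Finset.univ.powerset.filter
          (fun X : Finset ι => X.Nonempty ∧ X ≠ Finset.univ), f X) := by
  have hf : SuperadditiveOnNonempty f := hsuper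
  have hcoeff : ((2 ^ (Fintype.card ι - 1) - 1 : ℕ) : ℝ) = 2 ^ (Fintype.card ι - 1) - 1 := by
    norm_num [Nat.cast_sub Nat.one_le_two_pow]
  have hupper := hf.sum_properNonemptySubsets_le
  have hlower := hf.smul_sum_singleton_le
  rw [nsmul_eq_mul, hcoeff] at hupper hlower
  exact ⟨hupper, hlower⟩

/-- **Strong monogamy inequality.** For `f` nonnegative on subsets of a finite
type `ι` with `n = |ι| ≥ 2` elements, superadditive on disjoint nonempty sets,
`(2^(n-1) - 1) f(ι) ≥ ∑_{∅ ≠ X ⊊ ι} f(X) ≥ (2^(n-1) - 1) ∑_j f({j})`. -/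
theorem strong_monogamy
    {ι : Type*} [Fintype ι] [DecidableEq ι]
    (hn : 2 ≤ Fintype.card ι)
    (f : Finset ι → ℝ) (hf0 : ∀ X, 0 ≤ f X)
    (hsuper : ∀ X Y : Finset ι, Disjoint X Y → X.Nonempty → Y.Nonempty →
      f X + f Y ≤ f (X ∪ Y)) :
    (∑ X ∈ Finset.univ.powerset.filter
        (fun X : Finset ι => X.Nonempty ∧ X ≠ Finset.univ), f X
      ≤ ((2 : ℝ) ^ (Fintype.card ι - 1) - 1) * f Finset.univ)
    ∧ (((2 : ℝ) ^ (Fintype.card ι - 1) - 1) * ∑ j, f {j}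
      ≤ ∑ X ∈ Finset.univ.powerset.filter
          (fun X : Finset ι => X.Nonempty ∧ X ≠ Finset.univ), f X) :=
  strong_monogamy_general f hsuper
end

section
/- Let $\iota$ be a finite type with $n = |\iota| \geq 2$ elements, and let $f$ be a function from subsets of $\iota$ to the nonnegative reals that is subadditive on disjoint nonempty sets: $f(X \cup Y) \leq f(X) + f(Y)$ whenever $X, Y$ are disjoint nonempty subsets of $\iota$. Then $(2^{n-1}-1)\, f(\iota) \;\leq\; \sum_{\emptyset \neq X \subsetneq \iota} f(X) \;\leq\; (2^{n-1}-1) \sum_{j \in \iota} f(\{j\})$, where the middle sum runs over all nonempty proper subsets $X$ of $\iota$. (Strong non-monogamy inequality.) -/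
/-!
Subadditivity across the split `ι = X ⊔ Xᶜ` gives `f ι ≤ f X + f Xᶜ` for each of the
`2 (2^(n-1) - 1)` nontrivial subsets `X`; since complementation permutes them, summing gives
the lower bound. For the upper bound, subadditivity peels `f X` down to `∑_{j ∈ X} f {j}`, and
each `j` lies in exactly `2^(n-1) - 1` nontrivial subsets (half of all subsets, minus `ι`).
-/

open Finset

theorem Finset.le_sum_singleton_of_subadditive {α M : Type*} [DecidableEq α] [AddCommMonoid M]
    [PartialOrder M] [IsOrderedAddMonoid M] {f : Finset α → M}
    (hsub : ∀ X Y : Finset α, Disjoint X Y → X.Nonempty → Y.Nonempty →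
      f (X ∪ Y) ≤ f X + f Y) {X : Finset α} (hX : X.Nonempty) :
    f X ≤ ∑ j ∈ X, f {j} := by
  induction hX using Finset.Nonempty.cons_induction with
  | singleton j => simp
  | cons j Y hj hY ih =>
    rw [cons_eq_insert, sum_insert hj, ← singleton_union]
    exact (hsub {j} Y (disjoint_singleton_left.2 hj) (singleton_nonempty j) hY).trans
      (add_le_add_right ih _)

theorem Finset.sum_sum_eq_nsmul_sum_of_card_filter_mem_eq {α M : Type*} [Fintype α]
    [DecidableEq α] [AddCommMonoid M] (B : Finset (Finset α)) (g : α → M) {m : ℕ}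
    (hm : ∀ a, #{X ∈ B | a ∈ X} = m) :
    ∑ X ∈ B, ∑ a ∈ X, g a = m • ∑ a, g a := by
  rw [sum_comm' (t' := univ) (s' := fun a => {X ∈ B | a ∈ X}) (by simp), smul_sum]
  simp [hm]

namespace Finset

variable {ι : Type*} [Fintype ι] [DecidableEq ι]

theorem card_filter_mem_univ_finset (j : ι) :
    #{X : Finset ι | j ∈ X} = 2 ^ (Fintype.card ι - 1) := by
  have hcompl : #{X : Finset ι | j ∈ X} = #{X : Finset ι | j ∉ X} :=
    card_nbij' (·ᶜ) (·ᶜ) (fun X hX => by simpa using hX) (fun X hX => by simpa using hX)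
      (fun X _ => compl_compl X) (fun X _ => compl_compl X)
  have hpowerset : ({X : Finset ι | j ∉ X} : Finset _) = (univ.erase j).powerset := by
    ext X; simp [subset_erase]
  rw [hcompl, hpowerset, card_powerset, card_erase_of_mem (mem_univ j), card_univ]

variable (ι) in
def nontrivialSubsets : Finset (Finset ι) :=
  univ.powerset.filter (fun X : Finset ι => X.Nonempty ∧ X ≠ univ)

@[simp]
theorem mem_nontrivialSubsets {X : Finset ι} :
    X ∈ nontrivialSubsets ι ↔ X.Nonempty ∧ X ≠ univ := by
  simp [nontrivialSubsets]

theorem compl_mem_nontrivialSubsets {X : Finset ι} (hX : X ∈ nontrivialSubsets ι) :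
    Xᶜ ∈ nontrivialSubsets ι := by
  simp_all [nonempty_iff_ne_empty]

theorem sum_nontrivialSubsets_compl {M : Type*} [AddCommMonoid M] (g : Finset ι → M) :
    ∑ X ∈ nontrivialSubsets ι, g Xᶜ = ∑ X ∈ nontrivialSubsets ι, g X :=
  sum_nbij' (·ᶜ) (·ᶜ) (fun _ => compl_mem_nontrivialSubsets)
    (fun _ => compl_mem_nontrivialSubsets) (fun X _ => compl_compl X)
    (fun X _ => compl_compl X) (fun _ _ => rfl)

theorem card_nontrivialSubsets :
    #(nontrivialSubsets ι) = 2 * (2 ^ (Fintype.card ι - 1) - 1) := by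
  obtain hι | hι := isEmpty_or_nonempty ι
  · simp [nontrivialSubsets]
  have hsdiff : nontrivialSubsets ι = univ \ {∅, univ} := by
    ext X; simp [nonempty_iff_ne_empty]
  obtain ⟨n, hn⟩ := Nat.exists_eq_add_one.2 (Fintype.card_pos (α := ι))
  rw [hsdiff, card_sdiff_of_subset (subset_univ _), card_pair univ_nonempty.ne_empty.symm,
    card_univ, Fintype.card_finset, hn, Nat.add_sub_cancel, pow_succ]
  omega

theorem card_filter_mem_nontrivialSubsets (j : ι) :
    #{X ∈ nontrivialSubsets ι | j ∈ X} = 2 ^ (Fintype.card ι - 1) - 1 := by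
  have hX : ({X ∈ nontrivialSubsets ι | j ∈ X} : Finset _) =
      ({X | j ∈ X} : Finset _).erase univ := by
    ext X
    simp only [mem_filter, mem_erase, mem_univ, true_and, mem_nontrivialSubsets]
    exact ⟨fun ⟨⟨_, hX⟩, hj⟩ => ⟨hX, hj⟩, fun ⟨hX, hj⟩ => ⟨⟨⟨j, hj⟩, hX⟩, hj⟩⟩
  rw [hX, card_erase_of_mem (by simp), card_filter_mem_univ_finset]

theorem mul_le_sum_nontrivialSubsets {R : Type*} [Field R] [LinearOrder R]
    [IsStrictOrderedRing R] {f : Finset ι → R}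
    (hsub : ∀ X Y : Finset ι, Disjoint X Y → X.Nonempty → Y.Nonempty →
      f (X ∪ Y) ≤ f X + f Y) :
    (2 ^ (Fintype.card ι - 1) - 1) * f univ ≤ ∑ X ∈ nontrivialSubsets ι, f X := by
  have hpair : ∀ X ∈ nontrivialSubsets ι, f univ ≤ f X + f Xᶜ := fun X hX => by
    have hXc := mem_nontrivialSubsets.1 (compl_mem_nontrivialSubsets hX)
    simpa using hsub X Xᶜ disjoint_compl_right (mem_nontrivialSubsets.1 hX).1 hXc.1
  have hsum : #(nontrivialSubsets ι) • f univ ≤ 2 * ∑ X ∈ nontrivialSubsets ι, f X :=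
    calc #(nontrivialSubsets ι) • f univ = ∑ _X ∈ nontrivialSubsets ι, f univ :=
          (sum_const _).symm
      _ ≤ ∑ X ∈ nontrivialSubsets ι, (f X + f Xᶜ) := sum_le_sum hpair
      _ = 2 * ∑ X ∈ nontrivialSubsets ι, f X := by
        rw [sum_add_distrib, sum_nontrivialSubsets_compl f, two_mul]
  rw [card_nontrivialSubsets, nsmul_eq_mul] at hsum
  push_cast [Nat.cast_sub Nat.one_le_two_pow] at hsum
  linarith

theorem sum_nontrivialSubsets_le {R : Type*} [CommRing R] [PartialOrder R] [IsOrderedRing R]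
    {f : Finset ι → R}
    (hsub : ∀ X Y : Finset ι, Disjoint X Y → X.Nonempty → Y.Nonempty →
      f (X ∪ Y) ≤ f X + f Y) :
    ∑ X ∈ nontrivialSubsets ι, f X ≤ (2 ^ (Fintype.card ι - 1) - 1) * ∑ j, f {j} :=
  calc ∑ X ∈ nontrivialSubsets ι, f X ≤ ∑ X ∈ nontrivialSubsets ι, ∑ j ∈ X, f {j} :=
        sum_le_sum fun X hX => le_sum_singleton_of_subadditive hsub (mem_nontrivialSubsets.1 hX).1
    _ = (2 ^ (Fintype.card ι - 1) - 1 : ℕ) • ∑ j, f {j} :=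
        sum_sum_eq_nsmul_sum_of_card_filter_mem_eq _ _ card_filter_mem_nontrivialSubsets
    _ = (2 ^ (Fintype.card ι - 1) - 1) * ∑ j, f {j} := by
        rw [nsmul_eq_mul, Nat.cast_sub Nat.one_le_two_pow]
        push_cast
        ring

end Finset

theorem strong_nonmonogamy_general
    {ι : Type*} [Fintype ι] [DecidableEq ι]
    (f : Finset ι → ℝ)
    (hsub : ∀ X Y : Finset ι, Disjoint X Y → X.Nonempty → Y.Nonempty →
      f (X ∪ Y) ≤ f X + f Y) :
    (((2 : ℝ) ^ (Fintype.card ι - 1) - 1) * f Finset.univ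
      ≤ ∑ X ∈ Finset.univ.powerset.filter
          (fun X : Finset ι => X.Nonempty ∧ X ≠ Finset.univ), f X)
    ∧ (∑ X ∈ Finset.univ.powerset.filter
          (fun X : Finset ι => X.Nonempty ∧ X ≠ Finset.univ), f X
      ≤ ((2 : ℝ) ^ (Fintype.card ι - 1) - 1) * ∑ j, f {j}) :=
  ⟨mul_le_sum_nontrivialSubsets hsub, sum_nontrivialSubsets_le hsub⟩

/-- **Strong non-monogamy inequality.** For `f` nonnegative on subsets of a finite
type `ι` with `n = |ι| ≥ 2` elements, subadditive on disjoint nonempty sets,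
`(2^(n-1) - 1) f(ι) ≤ ∑_{∅ ≠ X ⊊ ι} f(X) ≤ (2^(n-1) - 1) ∑_j f({j})`. -/
theorem strong_nonmonogamy
    {ι : Type*} [Fintype ι] [DecidableEq ι]
    (hn : 2 ≤ Fintype.card ι)
    (f : Finset ι → ℝ) (hf0 : ∀ X, 0 ≤ f X)
    (hsub : ∀ X Y : Finset ι, Disjoint X Y → X.Nonempty → Y.Nonempty →
      f (X ∪ Y) ≤ f X + f Y) :
    (((2 : ℝ) ^ (Fintype.card ι - 1) - 1) * f Finset.univ
      ≤ ∑ X ∈ Finset.univ.powerset.filter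
          (fun X : Finset ι => X.Nonempty ∧ X ≠ Finset.univ), f X)
    ∧ (∑ X ∈ Finset.univ.powerset.filter
          (fun X : Finset ι => X.Nonempty ∧ X ≠ Finset.univ), f X
      ≤ ((2 : ℝ) ^ (Fintype.card ι - 1) - 1) * ∑ j, f {j}) :=
  strong_nonmonogamy_general f hsub
end
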